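/- Let W, T be real symmetric n×n matrices with W positive definite, T invertible, and α > 0 such that αT + W is positive definite. If p is an eigenvector of Z^{(α)} = (αT+W)^{−1/2}(T − αW)(αT+W)^{−1/2} with eigenvalue τ, then setting p̃ = (αT+W)^{−1/2} p, the vector p̃ satisfies (1 − ατ)·T p̃ = (α + τ)·W p̃; consequently, if α + τ ≠ 0, then ξ = (1 − ατ)/(α + τ) is an eigenvalue of T⁻¹W with eigenvector p̃. -/

import Mathlib

/-! Write `S` for the square root of `P = αT + W` and `p̃ = S⁻¹ p`. Multiplying `Z p = τ p` by `S`
turns it into the generalized eigenproblem `(T - αW) p̃ = τ P p̃`, and collecting the `T p̃` and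
`W p̃` terms gives `(1 - ατ) T p̃ = (α + τ) W p̃`. Since `S` is invertible, `p̃ ≠ 0`, and dividing
by `α + τ` and applying `T⁻¹` gives the eigenvalue `ξ = (1 - ατ)/(α + τ)` of `T⁻¹ W`. -/

open Matrix

open scoped ComplexOrder in
/-- The positive semidefinite square root of a positive semidefinite matrix
(the definition of `Matrix.PosSemidef.sqrt` in the older Mathlib, since removed). -/
noncomputable def Matrix.PosSemidef.sqrt {n 𝕜 : Type*} [Fintype n] [RCLike 𝕜] [DecidableEq n]
    {A : Matrix n n 𝕜} (hA : A.PosSemidef) : Matrix n n 𝕜 :=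
  hA.1.eigenvectorUnitary.1 * diagonal ((↑) ∘ (√·) ∘ hA.1.eigenvalues) *
  (star hA.1.eigenvectorUnitary : Matrix n n 𝕜)

namespace Matrix

variable {n : Type*} [Fintype n] [DecidableEq n]

section RCLike

open scoped ComplexOrder

variable {𝕜 : Type*} [RCLike 𝕜]

theorem PosSemidef.sqrt_mul_self {A : Matrix n n 𝕜} (hA : A.PosSemidef) :
    hA.sqrt * hA.sqrt = A := by
  unfold PosSemidef.sqrt
  have hU := Unitary.coe_star_mul_self hA.1.eigenvectorUnitary
  conv_rhs => rw [hA.1.spectral_theorem, Unitary.conjStarAlgAut_apply]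
  rw [show ∀ U D V : Matrix n n 𝕜, U * D * V * (U * D * V) = U * (D * (V * U) * D) * V by
    intro U D V; simp only [mul_assoc], hU, mul_one, diagonal_mul_diagonal]
  congr 3
  funext i
  simp only [Function.comp_apply]
  rw [← RCLike.ofReal_mul, Real.mul_self_sqrt (hA.eigenvalues_nonneg i)]

theorem PosDef.isUnit_sqrt {A : Matrix n n 𝕜} (hA : A.PosDef) :
    IsUnit hA.posSemidef.sqrt :=
  isUnit_of_mul_isUnit_left (hA.posSemidef.sqrt_mul_self ▸ hA.isUnit)

end RCLike

variable {R : Type*} [CommRing R]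

theorem mulVec_inv_eq_smul_mul_self_mulVec_inv {S A : Matrix n n R} (hS : IsUnit S) {τ : R}
    {p : n → R} (h : (S⁻¹ * A * S⁻¹) *ᵥ p = τ • p) :
    A *ᵥ (S⁻¹ *ᵥ p) = τ • ((S * S) *ᵥ (S⁻¹ *ᵥ p)) := by
  have hdet : IsUnit S.det := (isUnit_iff_isUnit_det S).1 hS
  calc A *ᵥ (S⁻¹ *ᵥ p) = S *ᵥ ((S⁻¹ * A * S⁻¹) *ᵥ p) := by
        simp only [mulVec_mulVec, ← mul_assoc, mul_nonsing_inv S hdet, one_mul]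
    _ = τ • ((S * S) *ᵥ (S⁻¹ *ᵥ p)) := by
        rw [h, mulVec_smul, mulVec_mulVec, mul_assoc, mul_nonsing_inv S hdet, mul_one]

variable {K : Type*} [Field K]

theorem inv_mul_mulVec_eq_div_smul {T W : Matrix n n K} {q : n → K} {a b : K} (hT : IsUnit T)
    (hb : b ≠ 0) (h : a • (T *ᵥ q) = b • (W *ᵥ q)) :
    (T⁻¹ * W) *ᵥ q = (a / b) • q := by
  have hW : W *ᵥ q = (a / b) • (T *ᵥ q) := by
    rw [div_eq_inv_mul, ← smul_smul, h, smul_smul, inv_mul_cancel₀ hb, one_smul]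
  rw [← mulVec_mulVec, hW, mulVec_smul, mulVec_mulVec,
    nonsing_inv_mul T ((isUnit_iff_isUnit_det T).1 hT), one_mulVec]

end Matrix

theorem smul_eq_smul_of_sub_smul_eq_smul_smul_add {R M : Type*} [CommRing R] [AddCommGroup M]
    [Module R M] {x y : M} {α τ : R} (h : x - α • y = τ • (α • x + y)) :
    (1 - α * τ) • x = (α + τ) • y := by
  linear_combination (norm := module) h

theorem stmt_19_general {n : ℕ} (W T : Matrix (Fin n) (Fin n) ℝ)
    (hTinv : IsUnit T)
    (α : ℝ) (hP : (α • T + W).PosDef)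
    (τ : ℝ) (p : Fin n → ℝ) (hp : p ≠ 0)
    (heig : (hP.posSemidef.sqrt⁻¹ * (T - α • W) * hP.posSemidef.sqrt⁻¹) *ᵥ p = τ • p) :
    (1 - α * τ) • (T *ᵥ (hP.posSemidef.sqrt⁻¹ *ᵥ p)) =
        (α + τ) • (W *ᵥ (hP.posSemidef.sqrt⁻¹ *ᵥ p)) ∧
      hP.posSemidef.sqrt⁻¹ *ᵥ p ≠ 0 ∧
      (α + τ ≠ 0 →
        (T⁻¹ * W) *ᵥ (hP.posSemidef.sqrt⁻¹ *ᵥ p) =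
          ((1 - α * τ) / (α + τ)) • (hP.posSemidef.sqrt⁻¹ *ᵥ p)) := by
  have hS := hP.isUnit_sqrt
  have hpencil := mulVec_inv_eq_smul_mul_self_mulVec_inv hS heig
  rw [hP.posSemidef.sqrt_mul_self, sub_mulVec, add_mulVec, smul_mulVec, smul_mulVec] at hpencil
  have hrel := smul_eq_smul_of_sub_smul_eq_smul_smul_add hpencil
  refine ⟨hrel, ?_, fun hατ ↦ inv_mul_mulVec_eq_div_smul hTinv hατ hrel⟩
  simpa using (mulVec_injective_of_isUnit (isUnit_nonsing_inv_iff.2 hS)).ne hp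

theorem stmt_19 {n : ℕ} (W T : Matrix (Fin n) (Fin n) ℝ)
    (hW : W.PosDef) (hTsymm : T.IsSymm) (hTinv : IsUnit T)
    (α : ℝ) (hα : 0 < α) (hP : (α • T + W).PosDef)
    (τ : ℝ) (p : Fin n → ℝ) (hp : p ≠ 0)
    (heig : (hP.posSemidef.sqrt⁻¹ * (T - α • W) * hP.posSemidef.sqrt⁻¹) *ᵥ p = τ • p) :
    (1 - α * τ) • (T *ᵥ (hP.posSemidef.sqrt⁻¹ *ᵥ p)) =
        (α + τ) • (W *ᵥ (hP.posSemidef.sqrt⁻¹ *ᵥ p)) ∧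
      hP.posSemidef.sqrt⁻¹ *ᵥ p ≠ 0 ∧
      (α + τ ≠ 0 →
        (T⁻¹ * W) *ᵥ (hP.posSemidef.sqrt⁻¹ *ᵥ p) =
          ((1 - α * τ) / (α + τ)) • (hP.posSemidef.sqrt⁻¹ *ᵥ p)) :=
  stmt_19_general W T hTinv α hP τ p hp heig
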